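/- arXiv:math/0509255 — 7 statements merged into one kernel-verified Lean document; each statement's English description precedes it below -/
import Mathlib

section
/- For all n ≥ 0, 4^n = ∑_{k=0}^{n} ((k+1)/(n+1)) * C(2n+2, n-k) * (k+1), i.e. 4^n = ∑_{k=0}^n ((k+1)^2/(n+1)) * C(2n+2, n-k). -/
open Finset

private lemma halfsumQ (m : ℕ) :
    ∑ i ∈ range (m + 1), ((2 * m + 1).choose i : ℚ) = 4 ^ m := by
  have h := congrArg (fun x : ℕ => (x : ℚ)) (Nat.sum_range_choose_halfway m)
  push_cast at h
  simpa using h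

private lemma evensumQ (m : ℕ) :
    ∑ i ∈ range (m + 1), ((2 * m + 2).choose i : ℚ)
      = 2 * 4 ^ m - ((2 * m + 1).choose m : ℚ) := by
  rw [Finset.sum_range_succ']
  have h1 : ∀ i ∈ range m, ((2 * m + 2).choose (i + 1) : ℚ)
      = ((2 * m + 1).choose i : ℚ) + ((2 * m + 1).choose (i + 1) : ℚ) := by
    intro i _
    exact_mod_cast congrArg (fun x : ℕ => (x : ℚ)) (Nat.choose_succ_succ (2 * m + 1) i)
  rw [Finset.sum_congr rfl h1, Finset.sum_add_distrib]
  have hA : ∑ i ∈ range m, ((2 * m + 1).choose i : ℚ)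
      = 4 ^ m - ((2 * m + 1).choose m : ℚ) := by
    have h := halfsumQ m
    rw [Finset.sum_range_succ] at h
    linarith
  have hB : ∑ i ∈ range m, ((2 * m + 1).choose (i + 1) : ℚ) = 4 ^ m - 1 := by
    have h := halfsumQ m
    rw [Finset.sum_range_succ'] at h
    simp only [Nat.choose_zero_right, Nat.cast_one] at h
    linarith
  rw [hA, hB]
  simp only [Nat.choose_zero_right, Nat.cast_one]
  ring

private lemma centralQ (m : ℕ) :
    ((2 * m + 2).choose (m + 1) : ℚ) = 2 * ((2 * m + 1).choose m : ℚ) := by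
  have h : (2 * m + 2).choose (m + 1)
      = (2 * m + 1).choose m + (2 * m + 1).choose (m + 1) :=
    Nat.choose_succ_succ (2 * m + 1) m
  rw [Nat.choose_symm_half m] at h
  exact_mod_cast congrArg (fun x : ℕ => (x : ℚ)) (by omega : (2*m+2).choose (m+1) = 2 * (2*m+1).choose m)

private lemma UsumQ (n : ℕ) :
    2 * ∑ i ∈ range n, ((2 * n).choose i : ℚ) + ((2 * n).choose n : ℚ) = 4 ^ n := by
  cases n with
  | zero => simp
  | succ m =>
    have hs : 2 * (m + 1) = 2 * m + 2 := by ring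
    rw [hs, evensumQ m, centralQ m]
    ring

private lemma keyQ (n : ℕ) :
    ((n : ℚ) + 1) * ((2 * n + 1).choose n : ℚ)
      = (2 * (n : ℚ) + 1) * ((2 * n).choose n : ℚ) := by
  have h := Nat.add_one_mul_choose_eq (2 * n) n
  rw [show (2*n).succ.choose n.succ = (2*n+1).choose (n+1) from rfl, Nat.choose_symm_half n] at h
  have h2 := congrArg (fun x : ℕ => (x : ℚ)) h
  push_cast at h2
  linarith

private lemma termQ (n i : ℕ) (hi : i ≤ 2 * n) :
    ((n : ℚ) - i) ^ 2 * ((2 * n + 2).choose (i + 1) : ℚ)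
      = ((n : ℚ) + 1) ^ 2 * ((2 * n + 2).choose (i + 1) : ℚ)
        - (2 * (n : ℚ) + 2) * (2 * (n : ℚ) + 1) * ((2 * n).choose i : ℚ) := by
  have h1 : ((i : ℚ) + 1) * ((2 * n + 2).choose (i + 1) : ℚ)
      = (2 * (n : ℚ) + 2) * ((2 * n + 1).choose i : ℚ) := by
    have h := congrArg (fun x : ℕ => (x : ℚ)) (Nat.add_one_mul_choose_eq (2 * n + 1) i)
    push_cast at h
    linarith
  have h2 : (2 * (n : ℚ) + 1 - i) * ((2 * n + 1).choose i : ℚ)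
      = (2 * (n : ℚ) + 1) * ((2 * n).choose i : ℚ) := by
    have ha := Nat.choose_succ_right_eq (2 * n + 1) i
    have hb := Nat.add_one_mul_choose_eq (2 * n) i
    have hc : (2 * n + 1) * (2 * n).choose i = (2 * n + 1).choose i * (2 * n + 1 - i) := by
      rw [show (2*n).succ * (2*n).choose i = (2*n+1) * (2*n).choose i from rfl] at hb
      rw [hb]
      exact ha
    have h := congrArg (fun x : ℕ => (x : ℚ)) hc
    push_cast [Nat.cast_sub (by omega : i ≤ 2 * n + 1)] at h
    linarith
  linear_combination (-(2 * (n : ℚ) + 1 - i)) * h1 - (2 * (n : ℚ) + 2) * h2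

/-- Shapiro–Woan–Getu: `4^n = ∑_{k=0}^n ((k+1)^2/(n+1)) C(2n+2, n-k)`. -/
theorem stmt_0 (n : ℕ) :
    (4 : ℚ) ^ n =
      ∑ k ∈ Finset.range (n + 1),
        ((k + 1 : ℚ) ^ 2 / (n + 1)) * (Nat.choose (2 * n + 2) (n - k) : ℚ) := by
  have hn1 : ((n : ℚ) + 1) ≠ 0 := by positivity
  have main : (4 : ℚ) ^ n * ((n : ℚ) + 1)
      = ∑ k ∈ range (n + 1), ((k : ℚ) + 1) ^ 2 * ((2 * n + 2).choose (n - k) : ℚ) := by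
    rw [← Finset.sum_range_reflect]
    have hterm : ∀ j ∈ range (n + 1),
        ((↑(n + 1 - 1 - j) : ℚ) + 1) ^ 2 * ((2 * n + 2).choose (n - (n + 1 - 1 - j)) : ℚ)
          = ((n : ℚ) - j + 1) ^ 2 * ((2 * n + 2).choose j : ℚ) := by
      intro j hj
      simp only [mem_range] at hj
      have e1 : n + 1 - 1 - j = n - j := by omega
      have e2 : n - (n - j) = j := by omega
      have e3 : ((n - j : ℕ) : ℚ) = (n : ℚ) - j := by
        push_cast [Nat.cast_sub (by omega : j ≤ n)]
        ring
      rw [e1, e2, e3]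
    rw [Finset.sum_congr rfl hterm, Finset.sum_range_succ']
    have hterm2 : ∀ i ∈ range n,
        ((n : ℚ) - ↑(i + 1) + 1) ^ 2 * ((2 * n + 2).choose (i + 1) : ℚ)
          = ((n : ℚ) + 1) ^ 2 * ((2 * n + 2).choose (i + 1) : ℚ)
            - (2 * (n : ℚ) + 2) * (2 * (n : ℚ) + 1) * ((2 * n).choose i : ℚ) := by
      intro i hi
      simp only [mem_range] at hi
      have := termQ n i (by omega)
      push_cast
      push_cast at this
      linear_combination this
    rw [Finset.sum_congr rfl hterm2, Finset.sum_sub_distrib, ← Finset.mul_sum, ← Finset.mul_sum]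
    have hSA : ∑ i ∈ range n, ((2 * n + 2).choose (i + 1) : ℚ)
        = 2 * 4 ^ n - ((2 * n + 1).choose n : ℚ) - 1 := by
      have h := evensumQ n
      rw [Finset.sum_range_succ'] at h
      simp only [Nat.choose_zero_right, Nat.cast_one] at h
      linarith
    have hSB := UsumQ n
    have hkey := keyQ n
    rw [hSA]
    simp only [Nat.cast_zero, Nat.choose_zero_right, Nat.cast_one]
    linear_combination (((n : ℚ) + 1) * (2 * (n : ℚ) + 1)) * hSB + ((n : ℚ) + 1) * hkey
  have hrw : ∀ k ∈ range (n + 1),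
      ((k + 1 : ℚ) ^ 2 / (n + 1)) * (Nat.choose (2 * n + 2) (n - k) : ℚ)
        = (((k : ℚ) + 1) ^ 2 * ((2 * n + 2).choose (n - k) : ℚ)) / ((n : ℚ) + 1) := by
    intro k _
    field_simp
  rw [Finset.sum_congr rfl hrw, ← Finset.sum_div, eq_div_iff hn1]
  exact main
end

section
/- Define a_{i,j} = (j/i) * C(2i, i-j) for 1 ≤ j ≤ i. Then ∑_{j=1}^{i} j * a_{i,j} = 4^{i-1} for all i ≥ 1. -/
open Finset

private lemma sum0Q (n : ℕ) : ∑ k ∈ range (n + 1), (Nat.choose n k : ℚ) = 2 ^ n := by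
  exact_mod_cast congrArg (Nat.cast : ℕ → ℚ) (Nat.sum_range_choose n)

private lemma sum1Q (n : ℕ) :
    ∑ k ∈ range (n + 2), (k : ℚ) * Nat.choose (n + 1) k = (n + 1) * 2 ^ n := by
  rw [Finset.sum_range_succ']
  have h : ∀ k : ℕ, ((k : ℚ) + 1) * Nat.choose (n + 1) (k + 1)
      = (n + 1) * Nat.choose n k := by
    intro k
    have h := Nat.add_one_mul_choose_eq n k
    have h2 : ((n + 1) * Nat.choose n k : ℕ) = ((n + 1).choose (k + 1) * (k + 1) : ℕ) := h
    have h3 : ((n : ℚ) + 1) * Nat.choose n k = Nat.choose (n + 1) (k + 1) * ((k : ℚ) + 1) := by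
      exact_mod_cast congrArg (Nat.cast : ℕ → ℚ) h2
    linarith [h3]
  simp only [Nat.cast_zero, zero_mul, add_zero, Nat.cast_add, Nat.cast_one]
  calc ∑ k ∈ range (n + 1), ((k : ℚ) + 1) * Nat.choose (n + 1) (k + 1)
      = ∑ k ∈ range (n + 1), ((n : ℚ) + 1) * Nat.choose n k := by
        exact Finset.sum_congr rfl fun k _ => h k
    _ = ((n : ℚ) + 1) * ∑ k ∈ range (n + 1), (Nat.choose n k : ℚ) := by
        rw [Finset.mul_sum]
    _ = ((n : ℚ) + 1) * 2 ^ n := by rw [sum0Q]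

private lemma sum2Q (n : ℕ) :
    ∑ k ∈ range (n + 3), (k : ℚ) * ((k : ℚ) - 1) * Nat.choose (n + 2) k
      = (n + 2) * (n + 1) * 2 ^ n := by
  rw [Finset.sum_range_succ', Finset.sum_range_succ']
  have h : ∀ k : ℕ, ((k : ℚ) + 2) * ((k : ℚ) + 1) * Nat.choose (n + 2) (k + 2)
      = (n + 2) * (n + 1) * Nat.choose n k := by
    intro k
    have h1 : ((n : ℚ) + 2) * Nat.choose (n + 1) (k + 1)
        = Nat.choose (n + 2) (k + 2) * ((k : ℚ) + 2) := by
      exact_mod_cast congrArg (Nat.cast : ℕ → ℚ) (Nat.add_one_mul_choose_eq (n + 1) (k + 1))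
    have h2 : ((n : ℚ) + 1) * Nat.choose n k
        = Nat.choose (n + 1) (k + 1) * ((k : ℚ) + 1) := by
      exact_mod_cast congrArg (Nat.cast : ℕ → ℚ) (Nat.add_one_mul_choose_eq n k)
    nlinarith [h1, h2]
  push_cast
  simp only [zero_mul, mul_zero, add_zero, zero_add, zero_sub, mul_neg, neg_zero,
    sub_self, mul_one, one_mul]
  calc ∑ k ∈ range (n + 1), ((k : ℚ) + 1 + 1) * ((k : ℚ) + 1 + 1 - 1) * Nat.choose (n + 2) (k + 1 + 1)
      = ∑ k ∈ range (n + 1), ((n : ℚ) + 2) * ((n : ℚ) + 1) * Nat.choose n k := by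
        refine Finset.sum_congr rfl fun k _ => ?_
        have := h k
        push_cast at this ⊢
        linarith [this]
    _ = ((n : ℚ) + 2) * ((n : ℚ) + 1) * ∑ k ∈ range (n + 1), (Nat.choose n k : ℚ) := by
        rw [Finset.mul_sum]
    _ = ((n : ℚ) + 2) * ((n : ℚ) + 1) * 2 ^ n := by rw [sum0Q]

/-- The full weighted sum: ∑_{k=0}^{2i} (i-k)² C(2i,k) = 2i·4^{i-1}. -/
private lemma sumFull (m : ℕ) :
    ∑ k ∈ range (2 * (m + 1) + 1),
        ((m : ℚ) + 1 - (k : ℚ)) ^ 2 * Nat.choose (2 * (m + 1)) k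
      = 2 * ((m : ℚ) + 1) * 4 ^ m := by
  have key : ∀ k : ℕ,
      ((m : ℚ) + 1 - (k : ℚ)) ^ 2 * Nat.choose (2 * (m + 1)) k
        = ((m : ℚ) + 1) ^ 2 * Nat.choose (2 * (m + 1)) k
          - (2 * ((m : ℚ) + 1) - 1) * ((k : ℚ) * Nat.choose (2 * (m + 1)) k)
          + (k : ℚ) * ((k : ℚ) - 1) * Nat.choose (2 * (m + 1)) k := by
    intro k; ring
  rw [Finset.sum_congr rfl fun k _ => key k]
  rw [Finset.sum_add_distrib, Finset.sum_sub_distrib, ← Finset.mul_sum, ← Finset.mul_sum]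
  have e1 : 2 * (m + 1) + 1 = (2 * m + 1) + 1 + 1 := by ring
  have e2 : 2 * (m + 1) = (2 * m + 1) + 1 := by ring
  have e3 : 2 * (m + 1) = 2 * m + 2 := by ring
  have h0 : ∑ k ∈ range (2 * (m + 1) + 1), (Nat.choose (2 * (m + 1)) k : ℚ)
      = 2 ^ (2 * (m + 1)) := by
    have := sum0Q (2 * (m + 1)); exact this
  have h1 : ∑ k ∈ range (2 * (m + 1) + 1), (k : ℚ) * Nat.choose (2 * (m + 1)) k
      = (2 * (m : ℚ) + 2) * 2 ^ (2 * m + 1) := by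
    have := sum1Q (2 * m + 1)
    rw [e1, e2]
    convert this using 2 <;> push_cast <;> ring
  have h2 : ∑ k ∈ range (2 * (m + 1) + 1), (k : ℚ) * ((k : ℚ) - 1) * Nat.choose (2 * (m + 1)) k
      = (2 * (m : ℚ) + 2) * (2 * (m : ℚ) + 1) * 2 ^ (2 * m) := by
    have := sum2Q (2 * m)
    have e4 : 2 * (m + 1) + 1 = 2 * m + 3 := by ring
    have e5 : 2 * (m + 1) = 2 * m + 2 := by ring
    rw [e4, e5]
    convert this using 2 <;> push_cast <;> ring
  rw [h0, h1, h2]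
  have hp : (2 : ℚ) ^ (2 * (m + 1)) = 4 * 4 ^ m := by
    rw [pow_mul]; norm_num; ring
  have hp1 : (2 : ℚ) ^ (2 * m + 1) = 2 * 4 ^ m := by
    rw [pow_succ, pow_mul]; norm_num; ring
  have hp2 : (2 : ℚ) ^ (2 * m) = 4 ^ m := by
    rw [pow_mul]; norm_num
  rw [hp, hp1, hp2]
  ring

/-- The half sum: ∑_{k=0}^{i-1} (i-k)² C(2i,k) equals half of the full sum. -/
private lemma sumHalf (i : ℕ) (hi : 1 ≤ i) :
    ∑ k ∈ range (2 * i + 1), ((i : ℚ) - (k : ℚ)) ^ 2 * Nat.choose (2 * i) k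
      = 2 * ∑ k ∈ range i, ((i : ℚ) - (k : ℚ)) ^ 2 * Nat.choose (2 * i) k := by
  set f : ℕ → ℚ := fun k => ((i : ℚ) - (k : ℚ)) ^ 2 * Nat.choose (2 * i) k with hf
  have hsplit : range (2 * i + 1) = Ico 0 (i + 1) ∪ Ico (i + 1) (2 * i + 1) := by
    rw [Finset.Ico_union_Ico_eq_Ico (by omega) (by omega)]
    rw [Finset.range_eq_Ico]
  have hdisj : Disjoint (Ico 0 (i + 1)) (Ico (i + 1) (2 * i + 1)) :=
    Finset.Ico_disjoint_Ico_consecutive 0 (i + 1) (2 * i + 1)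
  rw [hsplit, Finset.sum_union hdisj]
  have h1 : ∑ k ∈ Ico 0 (i + 1), f k = ∑ k ∈ range i, f k := by
    have hE : Ico 0 (i + 1) = range (i + 1) := by rw [Finset.range_eq_Ico]
    rw [hE, Finset.sum_range_succ]
    have hfi : f i = 0 := by simp only [hf]; norm_num
    rw [hfi, add_zero]
  have h2 : ∑ k ∈ Ico (i + 1) (2 * i + 1), f k = ∑ k ∈ range i, f k := by
    rw [Finset.sum_Ico_eq_sum_range]
    have hn : 2 * i + 1 - (i + 1) = i := by omega
    rw [hn]
    rw [← Finset.sum_range_reflect (fun k => f k) i]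
    refine Finset.sum_congr rfl fun k hk => ?_
    rw [Finset.mem_range] at hk
    show f (i + 1 + k) = f (i - 1 - k)
    have hle : i + 1 + k ≤ 2 * i := by omega
    have hsym : Nat.choose (2 * i) (i + 1 + k) = Nat.choose (2 * i) (i - 1 - k) := by
      rw [← Nat.choose_symm hle]
      congr 1; omega
    simp only [hf]
    rw [hsym]
    congr 1
    have hc1 : ((i + 1 + k : ℕ) : ℚ) = (i : ℚ) + 1 + k := by push_cast; ring
    have hc2 : ((i - 1 - k : ℕ) : ℚ) = (i : ℚ) - 1 - k := by
      have : i - 1 - k = i - (1 + k) := by omega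
      rw [this, Nat.cast_sub (by omega)]
      push_cast; ring
    rw [hc1, hc2]
    ring
  rw [h1, h2]; ring

/-- With `a i j = (j/i) C(2i, i-j)`, one has `∑_{j=1}^i j ⬝ a i j = 4^(i-1)`. -/
theorem stmt_1 (i : ℕ) (hi : 1 ≤ i) :
    ∑ j ∈ Finset.Icc 1 i,
        (j : ℚ) * (((j : ℚ) / (i : ℚ)) * (Nat.choose (2 * i) (i - j) : ℚ)) =
      (4 : ℚ) ^ (i - 1) := by
  obtain ⟨m, rfl⟩ : ∃ m, i = m + 1 := ⟨i - 1, by omega⟩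
  set i := m + 1 with hi'
  have hT : ∑ j ∈ Finset.Icc 1 i, (j : ℚ) ^ 2 * Nat.choose (2 * i) (i - j)
      = ∑ k ∈ range i, ((i : ℚ) - (k : ℚ)) ^ 2 * Nat.choose (2 * i) k := by
    have hIcc : Finset.Icc 1 i = Finset.Ico 1 (i + 1) := by
      rw [Finset.Ico_add_one_right_eq_Icc]
    rw [hIcc, Finset.sum_Ico_eq_sum_range]
    have hn : i + 1 - 1 = i := by omega
    rw [hn]
    rw [← Finset.sum_range_reflect (fun k => ((i : ℚ) - (k : ℚ)) ^ 2 * Nat.choose (2 * i) k) i]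
    refine Finset.sum_congr rfl fun k hk => ?_
    rw [Finset.mem_range] at hk
    have h1 : i - (1 + k) = i - 1 - k := by omega
    have hc : ((i - 1 - k : ℕ) : ℚ) = (i : ℚ) - 1 - k := by
      have : i - 1 - k = i - (1 + k) := by omega
      rw [this, Nat.cast_sub (by omega)]
      push_cast; ring
    rw [h1, hc]
    push_cast
    ring
  have hfull := sumFull m
  have hhalf := sumHalf i (by omega)
  have hhalfval : ∑ k ∈ range i, ((i : ℚ) - (k : ℚ)) ^ 2 * Nat.choose (2 * i) k
      = (i : ℚ) * 4 ^ m := by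
    have : ((m : ℚ) + 1) = (i : ℚ) := by rw [hi']; push_cast; ring
    rw [this] at hfull
    have h2 : 2 * ∑ k ∈ range i, ((i : ℚ) - (k : ℚ)) ^ 2 * Nat.choose (2 * i) k
        = 2 * (i : ℚ) * 4 ^ m := by rw [← hhalf, hfull]
    linarith [h2]
  have hipos : (i : ℚ) ≠ 0 := by positivity
  have hm : i - 1 = m := by omega
  rw [hm]
  calc ∑ j ∈ Finset.Icc 1 i, (j : ℚ) * (((j : ℚ) / (i : ℚ)) * (Nat.choose (2 * i) (i - j) : ℚ))
      = (∑ j ∈ Finset.Icc 1 i, (j : ℚ) ^ 2 * Nat.choose (2 * i) (i - j)) / (i : ℚ) := by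
        rw [Finset.sum_div]
        refine Finset.sum_congr rfl fun j _ => ?_
        field_simp
    _ = ((i : ℚ) * 4 ^ m) / (i : ℚ) := by rw [hT, hhalfval]
    _ = 4 ^ m := by field_simp
end

section
/- For all n ≥ 0 and m ≥ 0, C(n, m) * 4^{n-m} = ∑_{k=0}^{n} ((k+1)/(n+1)) * C(k+m+1, k-m) * C(2n+2, n-k). -/
/-- Binomial coefficient with integer lower index, zero when that index is negative. -/
def chooseZ (a : ℕ) (b : ℤ) : ℕ := if 0 ≤ b then a.choose b.toNat else 0

lemma chooseZ_of_neg (a : ℕ) {b : ℤ} (h : b < 0) : chooseZ a b = 0 := by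
  simp [chooseZ, not_le.2 h]

lemma chooseZ_sub_of_le (a k m : ℕ) (h : m ≤ k) :
    chooseZ a ((k : ℤ) - (m : ℤ)) = a.choose (k - m) := by
  have h0 : (0:ℤ) ≤ (k : ℤ) - (m : ℤ) := by omega
  simp only [chooseZ, if_pos h0]
  congr 1
  omega

/-- Summand of the Cameron–Nkwanta sum (multiplied by `n+1`). -/
def A' (m n k : ℕ) : ℚ :=
  ((k : ℚ) + 1) * (chooseZ (k + m + 1) ((k : ℤ) - (m : ℤ)) : ℚ) *
    ((2 * n + 2).choose (n - k) : ℚ)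

/-- WZ-style certificate. -/
def Gc (m n k : ℕ) : ℚ :=
  ((n : ℚ) + 2) * (2 * (k : ℚ) + 1) * ((m : ℚ) - (k : ℚ)) *
    (chooseZ (k + m + 1) ((k : ℤ) - (m : ℤ)) : ℚ) *
    ((2 * n + 3).choose (n + 1 - k) : ℚ)

lemma Gc_eq_zero_of_le (m n k : ℕ) (h : k ≤ m) : Gc m n k = 0 := by
  rcases eq_or_lt_of_le h with rfl | h
  · simp [Gc]
  · have hz : chooseZ (k + m + 1) ((k : ℤ) - (m : ℤ)) = 0 :=
      chooseZ_of_neg _ (by omega)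
    simp [Gc, hz]

lemma key (m n k : ℕ) (hk : k ≤ n) :
    (2 * (n : ℚ) + 3) *
        (((n : ℚ) + 1 - (m : ℚ)) * A' m (n + 1) k - 4 * ((n : ℚ) + 2) * A' m n k) =
      Gc m n (k + 1) - Gc m n k := by
  rcases lt_or_ge k m with h | h
  · have hz : chooseZ (k + m + 1) ((k : ℤ) - (m : ℤ)) = 0 :=
      chooseZ_of_neg _ (by omega)
    rw [Gc_eq_zero_of_le m n k (le_of_lt h), Gc_eq_zero_of_le m n (k+1) (by omega)]
    simp [A', hz]
  · obtain ⟨j, rfl⟩ : ∃ j, k = m + j := ⟨k - m, by omega⟩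
    obtain ⟨i, rfl⟩ : ∃ i, n = m + j + i := ⟨n - (m + j), by omega⟩
    unfold A' Gc
    rw [chooseZ_sub_of_le _ _ _ (Nat.le_add_right m j),
        chooseZ_sub_of_le _ _ _ (by omega : m ≤ m + j + 1)]
    rw [show m + j - m = j from by omega,
        show m + j + 1 - m = j + 1 from by omega,
        show m + j + m + 1 = 2*m+j+1 from by ring,
        show m + j + 1 + m + 1 = 2*m+j+2 from by ring,
        show m + j + i + 1 - (m + j) = i + 1 from by omega,
        show m + j + i - (m + j) = i from by omega,
        show m + j + i + 1 - (m + j + 1) = i from by omega,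
        show 2 * (m + j + i + 1) + 2 = 2*(m+j+i)+4 from by ring]
    -- binomial relations
    have r1 : ((2*m+j+2).choose (j+1) : ℚ) * ((j:ℚ)+1)
        = (2*(m:ℚ)+(j:ℚ)+2) * ((2*m+j+1).choose j : ℚ) := by
      have h0 := Nat.add_one_mul_choose_eq (2*m+j+1) j
      rw [show 2*m+j+1+1 = 2*m+j+2 from by ring] at h0
      have h1 := congrArg (Nat.cast : ℕ → ℚ) h0
      push_cast at h1
      linear_combination -h1
    have r2 : ((2*(m+j+i)+3).choose (i+1) : ℚ) * ((i:ℚ)+1)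
        = (2*((m:ℚ)+(j:ℚ)+(i:ℚ))+3) * ((2*(m+j+i)+2).choose i : ℚ) := by
      have h0 := Nat.add_one_mul_choose_eq (2*(m+j+i)+2) i
      rw [show 2*(m+j+i)+2+1 = 2*(m+j+i)+3 from by ring] at h0
      have h1 := congrArg (Nat.cast : ℕ → ℚ) h0
      push_cast at h1
      linear_combination -h1
    have r3 : ((2*(m+j+i)+4).choose (i+1) : ℚ) * ((i:ℚ)+1)
        = (2*((m:ℚ)+(j:ℚ)+(i:ℚ))+4) * ((2*(m+j+i)+3).choose i : ℚ) := by
      have h0 := Nat.add_one_mul_choose_eq (2*(m+j+i)+3) i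
      rw [show 2*(m+j+i)+3+1 = 2*(m+j+i)+4 from by ring] at h0
      have h1 := congrArg (Nat.cast : ℕ → ℚ) h0
      push_cast at h1
      linear_combination -h1
    have r4 : ((2*(m+j+i)+3).choose i : ℚ) * (2*(m:ℚ)+2*(j:ℚ)+(i:ℚ)+3)
        = (2*((m:ℚ)+(j:ℚ)+(i:ℚ))+3) * ((2*(m+j+i)+2).choose i : ℚ) := by
      have := Nat.choose_mul_succ_eq (2*(m+j+i)+2) i
      rw [show 2*(m+j+i)+2+1 = 2*(m+j+i)+3 from by ring] at this
      have hsub : ((2*(m+j+i)+3 - i : ℕ) : ℚ) = 2*(m:ℚ)+2*(j:ℚ)+(i:ℚ)+3 := by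
        push_cast [Nat.cast_sub (show i ≤ 2*(m+j+i)+3 by omega)]
        ring
      have := congrArg (Nat.cast : ℕ → ℚ) this
      push_cast at this
      rw [show ((2*(m+j+i)+3 - i : ℕ) : ℚ) = 2*(m:ℚ)+2*(j:ℚ)+(i:ℚ)+3 from hsub] at this
      linarith [this]
    have hc2 : ((2*m+j+2).choose (j+1) : ℚ)
        = (2*(m:ℚ)+(j:ℚ)+2) * ((2*m+j+1).choose j : ℚ) / ((j:ℚ)+1) := by
      rw [eq_div_iff (by positivity : ((j:ℚ)+1) ≠ 0)]; exact r1
    have hc4 : ((2*(m+j+i)+3).choose (i+1) : ℚ)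
        = (2*((m:ℚ)+(j:ℚ)+(i:ℚ))+3) * ((2*(m+j+i)+2).choose i : ℚ) / ((i:ℚ)+1) := by
      rw [eq_div_iff (by positivity : ((i:ℚ)+1) ≠ 0)]; exact r2
    have hc6 : ((2*(m+j+i)+4).choose (i+1) : ℚ)
        = (2*((m:ℚ)+(j:ℚ)+(i:ℚ))+4) * ((2*(m+j+i)+3).choose i : ℚ) / ((i:ℚ)+1) := by
      rw [eq_div_iff (by positivity : ((i:ℚ)+1) ≠ 0)]; exact r3
    have hc5 : ((2*(m+j+i)+3).choose i : ℚ)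
        = (2*((m:ℚ)+(j:ℚ)+(i:ℚ))+3) * ((2*(m+j+i)+2).choose i : ℚ)
            / (2*(m:ℚ)+2*(j:ℚ)+(i:ℚ)+3) := by
      rw [eq_div_iff (by positivity : (2*(m:ℚ)+2*(j:ℚ)+(i:ℚ)+3) ≠ 0)]; exact r4
    push_cast
    rw [hc6, hc5, hc4, hc2]
    field_simp
    ring

lemma Gc_zero (m n : ℕ) : Gc m n 0 = 0 := Gc_eq_zero_of_le m n 0 (Nat.zero_le m)

lemma Sq_rec (m n : ℕ) :
    ((n : ℚ) + 1 - (m : ℚ)) * (∑ k ∈ Finset.range (n + 2), A' m (n + 1) k) =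
      4 * ((n : ℚ) + 2) * ∑ k ∈ Finset.range (n + 1), A' m n k := by
  have h23 : (2 * (n : ℚ) + 3) ≠ 0 := by positivity
  apply mul_left_cancel₀ h23
  rw [Finset.sum_range_succ]
  have tele : ∑ k ∈ Finset.range (n + 1), (Gc m n (k + 1) - Gc m n k)
      = Gc m n (n + 1) - Gc m n 0 := Finset.sum_range_sub (Gc m n) (n + 1)
  have h1 : ∑ k ∈ Finset.range (n + 1),
      (2 * (n : ℚ) + 3) *
        (((n : ℚ) + 1 - (m : ℚ)) * A' m (n + 1) k - 4 * ((n : ℚ) + 2) * A' m n k)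
      = Gc m n (n + 1) - Gc m n 0 := by
    rw [← tele]
    exact Finset.sum_congr rfl fun k hk => key m n k (by
      have := Finset.mem_range.1 hk; omega)
  have expand : ∑ k ∈ Finset.range (n + 1),
      (2 * (n : ℚ) + 3) *
        (((n : ℚ) + 1 - (m : ℚ)) * A' m (n + 1) k - 4 * ((n : ℚ) + 2) * A' m n k)
      = (2 * (n : ℚ) + 3) * (((n : ℚ) + 1 - (m : ℚ)) *
          ∑ k ∈ Finset.range (n + 1), A' m (n + 1) k)
        - (2 * (n : ℚ) + 3) * (4 * ((n : ℚ) + 2) *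
          ∑ k ∈ Finset.range (n + 1), A' m n k) := by
    simp only [Finset.mul_sum]
    rw [← Finset.sum_sub_distrib]
    exact Finset.sum_congr rfl fun k _ => by ring
  have h3 : Gc m n (n + 1) +
      (2 * (n : ℚ) + 3) * (((n : ℚ) + 1 - (m : ℚ)) * A' m (n + 1) (n + 1)) = 0 := by
    unfold Gc A'
    rw [Nat.sub_self]
    simp only [Nat.choose_zero_right, Nat.cast_one]
    push_cast
    ring
  have h2 := Gc_zero m n
  rw [expand, h2] at h1
  linear_combination h1 + h3

lemma Sq_closed (m n : ℕ) (hmn : m ≤ n) :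
    (∑ k ∈ Finset.range (n + 1), A' m n k) =
      ((n : ℚ) + 1) * (n.choose m : ℚ) * 4 ^ (n - m) := by
  induction n, hmn using Nat.le_induction with
  | base =>
    rw [Finset.sum_eq_single_of_mem m (Finset.self_mem_range_succ m)]
    · unfold A'
      rw [chooseZ_sub_of_le _ _ _ le_rfl, Nat.sub_self]
      simp [Nat.choose_self]
    · intro k hk hkm
      have hk' : k < m := by
        have := Finset.mem_range.1 hk; omega
      have hz : chooseZ (k + m + 1) ((k : ℤ) - (m : ℤ)) = 0 :=
        chooseZ_of_neg _ (by omega)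
      simp [A', hz]
  | succ n hmn ih =>
    have hrec := Sq_rec m n
    rw [ih] at hrec
    have hne : ((n : ℚ) + 1 - (m : ℚ)) ≠ 0 := by
      have hm : (m : ℚ) ≤ (n : ℚ) := Nat.cast_le.2 hmn
      intro h; linarith
    apply mul_left_cancel₀ hne
    rw [hrec]
    have hc : ((n.choose m : ℚ)) * ((n : ℚ) + 1)
        = (((n + 1).choose m : ℚ)) * ((n : ℚ) + 1 - (m : ℚ)) := by
      have := congrArg (Nat.cast : ℕ → ℚ) (Nat.choose_mul_succ_eq n m)
      push_cast [Nat.cast_sub (show m ≤ n + 1 by omega)] at this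
      linarith [this]
    rw [show n + 1 - m = (n - m) + 1 from by omega, pow_succ]
    push_cast
    linear_combination (4 * ((n : ℚ) + 2) * (4:ℚ) ^ (n - m)) * hc

/-- The Cameron–Nkwanta identity
`C(n,m) 4^(n-m) = ∑_{k=0}^n ((k+1)/(n+1)) C(k+m+1, k-m) C(2n+2, n-k)`. -/
theorem stmt_3 (n m : ℕ) :
    (Nat.choose n m : ℚ) * 4 ^ (n - m) =
      ∑ k ∈ Finset.range (n + 1),
        ((k + 1 : ℚ) / (n + 1)) * (chooseZ (k + m + 1) ((k : ℤ) - (m : ℤ)) : ℚ) *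
          (Nat.choose (2 * n + 2) (n - k) : ℚ) := by
  rcases lt_or_ge n m with h | h
  · rw [Nat.choose_eq_zero_of_lt h]
    rw [Nat.cast_zero, zero_mul]
    symm
    apply Finset.sum_eq_zero
    intro k hk
    have hk' : k < m := by
      have := Finset.mem_range.1 hk; omega
    have hz : chooseZ (k + m + 1) ((k : ℤ) - (m : ℤ)) = 0 :=
      chooseZ_of_neg _ (by omega)
    simp [hz]
  · have hS := Sq_closed m n h
    have hn1 : ((n : ℚ) + 1) ≠ 0 := by positivity
    have hsum : ∑ k ∈ Finset.range (n + 1),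
        ((k + 1 : ℚ) / (n + 1)) * (chooseZ (k + m + 1) ((k : ℤ) - (m : ℤ)) : ℚ) *
          (Nat.choose (2 * n + 2) (n - k) : ℚ)
        = (∑ k ∈ Finset.range (n + 1), A' m n k) / ((n : ℚ) + 1) := by
      rw [Finset.sum_div]
      exact Finset.sum_congr rfl fun k _ => by unfold A'; ring
    rw [hsum, hS]
    field_simp
end

section
/- For all i ≥ 1 and m ≥ 0, C(i-1, m) * 4^{i-1-m} = ∑_{j=1}^{i} (j/i) * C(2i, i-j) * C(j+m, 2m+1). -/
open Finset

private def T (n m : ℕ) : ℕ :=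
  ∑ j ∈ Finset.range (n + 1), (2 * n + 1).choose (n + 1 + j) * (j + m).choose (2 * m)

private lemma pascal2 (a b : ℕ) :
    (a + 2).choose (b + 2) = a.choose b + 2 * a.choose (b + 1) + a.choose (b + 2) := by
  rw [show a + 2 = (a + 1) + 1 from rfl, Nat.choose_succ_succ, Nat.choose_succ_succ,
    Nat.choose_succ_succ (a) (b + 1)]
  ring

private lemma key2 (b m : ℕ) :
    (b + 2).choose (2 * m + 2) + b.choose (2 * m + 2)
      = b.choose (2 * m) + 2 * (b + 1).choose (2 * m + 2) := by
  have h1 := pascal2 b (2 * m)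
  have h2 : (b + 1).choose (2 * m + 2) = b.choose (2 * m + 1) + b.choose (2 * m + 2) :=
    Nat.choose_succ_succ b (2 * m + 1)
  omega

private lemma T_m0 (n : ℕ) : T n 0 = 4 ^ n := by
  have h := Nat.sum_range_choose_halfway n
  unfold T
  simp only [Nat.mul_zero, Nat.choose_zero_right, mul_one]
  rw [← h, ← Finset.sum_range_reflect (fun j => (2 * n + 1).choose (n + 1 + j)) (n + 1)]
  apply Finset.sum_congr rfl
  intro j hj
  have hj' : j ≤ n := by simpa using Nat.lt_succ_iff.mp (Finset.mem_range.mp hj)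
  have e1 : n + 1 + (n + 1 - 1 - j) = 2 * n + 1 - j := by omega
  rw [e1, Nat.choose_symm (by omega)]

private lemma T_rec (n m : ℕ) : T (n + 1) (m + 1) = T n m + 4 * T n (m + 1) := by
  have e1 : T (n + 1) (m + 1) = ∑ j ∈ range (n + 2),
      ((2 * n + 1).choose (n + j) + 2 * (2 * n + 1).choose (n + 1 + j)
        + (2 * n + 1).choose (n + 2 + j)) * (j + m + 1).choose (2 * m + 2) := by
    unfold T
    apply Finset.sum_congr rfl
    intro j _
    rw [show 2 * (n + 1) + 1 = (2 * n + 1) + 2 by ring,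
      show n + 1 + 1 + j = (n + j) + 2 by ring, pascal2,
      show n + j + 1 = n + 1 + j by omega, show n + j + 2 = n + 2 + j by omega,
      show j + (m + 1) = j + m + 1 by omega, show 2 * (m + 1) = 2 * m + 2 by omega]
  have SA : ∑ j ∈ range (n + 2), (2 * n + 1).choose (n + j) * (j + m + 1).choose (2 * m + 2)
      = ∑ j ∈ range (n + 1), (2 * n + 1).choose (n + 1 + j) * (j + m + 2).choose (2 * m + 2) := by
    rw [Finset.sum_range_succ']
    have h0 : (0 + m + 1).choose (2 * m + 2) = 0 := Nat.choose_eq_zero_of_lt (by omega)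
    rw [h0, mul_zero, add_zero]
    apply Finset.sum_congr rfl
    intro j _
    congr 2 <;> omega
  have SB : ∑ j ∈ range (n + 2), (2 * n + 1).choose (n + 1 + j) * (j + m + 1).choose (2 * m + 2)
      = ∑ j ∈ range (n + 1), (2 * n + 1).choose (n + 1 + j) * (j + m + 1).choose (2 * m + 2) := by
    rw [Finset.sum_range_succ]
    have h0 : (2 * n + 1).choose (n + 1 + (n + 1)) = 0 := Nat.choose_eq_zero_of_lt (by omega)
    rw [h0, zero_mul, add_zero]
  have SC : ∑ j ∈ range (n + 2), (2 * n + 1).choose (n + 2 + j) * (j + m + 1).choose (2 * m + 2)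
      = ∑ j ∈ range (n + 1), (2 * n + 1).choose (n + 1 + j) * (j + m).choose (2 * m + 2) := by
    rw [Finset.sum_range_succ, show ((2 * n + 1).choose (n + 2 + (n + 1))) = 0 from
      Nat.choose_eq_zero_of_lt (by omega), zero_mul, add_zero]
    conv_rhs => rw [Finset.sum_range_succ']
    rw [show ((0:ℕ) + m).choose (2 * m + 2) = 0 from Nat.choose_eq_zero_of_lt (by omega),
      mul_zero, add_zero, Finset.sum_range_succ,
      show ((2 * n + 1).choose (n + 2 + n)) = 0 from Nat.choose_eq_zero_of_lt (by omega),
      zero_mul, add_zero]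
    apply Finset.sum_congr rfl
    intro j _
    congr 2 <;> omega
  rw [e1]
  simp only [add_mul, Finset.sum_add_distrib, mul_assoc, ← Finset.mul_sum]
  rw [SA, SB, SC]
  have TB : T n (m + 1)
      = ∑ j ∈ range (n + 1), (2 * n + 1).choose (n + 1 + j) * (j + m + 1).choose (2 * m + 2) := by
    unfold T
    apply Finset.sum_congr rfl
    intro j _
    congr 2 <;> omega
  have TA : T n m = ∑ j ∈ range (n + 1), (2 * n + 1).choose (n + 1 + j) * (j + m).choose (2 * m) := by
    rfl
  rw [← TB, TA]
  have final : ∑ j ∈ range (n + 1), (2 * n + 1).choose (n + 1 + j) * (j + m + 2).choose (2 * m + 2)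
      + ∑ j ∈ range (n + 1), (2 * n + 1).choose (n + 1 + j) * (j + m).choose (2 * m + 2)
      = ∑ j ∈ range (n + 1), (2 * n + 1).choose (n + 1 + j) * (j + m).choose (2 * m)
      + 2 * T n (m + 1) := by
    rw [TB, Finset.mul_sum, ← Finset.sum_add_distrib, ← Finset.sum_add_distrib]
    apply Finset.sum_congr rfl
    intro j _
    have h := key2 (j + m) m
    rw [← Nat.mul_add, h]
    ring
  omega

private lemma T_eq (n : ℕ) : ∀ m, T n m = n.choose m * 4 ^ (n - m) := by
  induction n with
  | zero =>
    intro m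
    cases m with
    | zero => decide
    | succ m =>
      have h0 : (m + 1).choose (2 * (m + 1)) = 0 := Nat.choose_eq_zero_of_lt (by omega)
      simp [T, h0]
  | succ n ih =>
    intro m
    cases m with
    | zero => simp [T_m0]
    | succ m =>
      rw [T_rec, ih m, ih (m + 1), Nat.choose_succ_succ,
        show n + 1 - (m + 1) = n - m by omega]
      rcases le_or_gt (m + 1) n with h | h
      · rw [show n - m = (n - (m + 1)) + 1 by omega]
        ring
      · rw [Nat.choose_eq_zero_of_lt h, show n - m = 0 by omega,
          show n - (m + 1) = 0 by omega]
        ring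

private lemma key_s4 (n l : ℕ) (hl : l ≤ n) :
    ((l : ℚ) + 1) * ((2 * n + 2).choose (n - l)) =
      ((n : ℚ) + 1) * ((2 * n + 1).choose (n + 1 + l))
        - ((n : ℚ) + 1) * ((2 * n + 1).choose (n + 2 + l)) := by
  have hsym : (2 * n + 2).choose (n - l) = (2 * n + 2).choose (n + 2 + l) := by
    rw [show n - l = (2 * n + 2) - (n + 2 + l) by omega]
    exact Nat.choose_symm (by omega)
  have h1 : (2 * n + 2) * (2 * n + 1).choose (n + 1 + l)
      = (2 * n + 2).choose (n + 2 + l) * (n + 2 + l) := by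
    have := Nat.add_one_mul_choose_eq (2 * n + 1) (n + 1 + l)
    simpa [Nat.succ_eq_add_one, show n + 1 + l + 1 = n + 2 + l by omega,
      show 2 * n + 1 + 1 = 2 * n + 2 by omega] using this
  have h2 : (2 * n + 2).choose (n + 2 + l)
      = (2 * n + 1).choose (n + 1 + l) + (2 * n + 1).choose (n + 2 + l) := by
    rw [show 2 * n + 2 = (2 * n + 1) + 1 from rfl, show n + 2 + l = (n + 1 + l) + 1 by omega]
    exact Nat.choose_succ_succ _ _
  rw [hsym]
  have h1' : ((2 * n : ℚ) + 2) * ((2 * n + 1).choose (n + 1 + l))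
      = ((2 * n + 2).choose (n + 2 + l) : ℚ) * ((n : ℚ) + 2 + l) := by
    have := congrArg (Nat.cast : ℕ → ℚ) h1
    push_cast at this
    linarith [this]
  have h2' : ((2 * n + 2).choose (n + 2 + l) : ℚ)
      = ((2 * n + 1).choose (n + 1 + l) : ℚ) + ((2 * n + 1).choose (n + 2 + l) : ℚ) := by
    exact_mod_cast congrArg (Nat.cast : ℕ → ℚ) h2
  push_cast
  linear_combination -h1' - ((n : ℚ) + 1) * h2'

private lemma abel (n m : ℕ) :
    ∑ l ∈ range (n + 1),
        (((2 * n + 1).choose (n + 1 + l) : ℚ) - ((2 * n + 1).choose (n + 2 + l) : ℚ))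
          * ((l + m + 1).choose (2 * m + 1) : ℚ)
      = ∑ l ∈ range (n + 1), ((2 * n + 1).choose (n + 1 + l) : ℚ) * ((l + m).choose (2 * m) : ℚ) := by
  have h2 : ∑ l ∈ range (n + 1),
        ((2 * n + 1).choose (n + 2 + l) : ℚ) * ((l + m + 1).choose (2 * m + 1) : ℚ)
      = ∑ l ∈ range (n + 1),
        ((2 * n + 1).choose (n + 1 + l) : ℚ) * ((l + m).choose (2 * m + 1) : ℚ) := by
    rw [Finset.sum_range_succ, show ((2 * n + 1).choose (n + 2 + n)) = 0 from
      Nat.choose_eq_zero_of_lt (by omega)]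
    conv_rhs => rw [Finset.sum_range_succ']
    rw [show ((0 : ℕ) + m).choose (2 * m + 1) = 0 from Nat.choose_eq_zero_of_lt (by omega)]
    push_cast
    rw [zero_mul, add_zero, mul_zero, add_zero]
    apply Finset.sum_congr rfl
    intro l _
    congr 3 <;> omega
  simp only [sub_mul]
  rw [Finset.sum_sub_distrib, h2, ← Finset.sum_sub_distrib]
  apply Finset.sum_congr rfl
  intro l _
  have hg : ((l + m + 1).choose (2 * m + 1) : ℕ)
      = (l + m).choose (2 * m) + (l + m).choose (2 * m + 1) := by
    rw [show l + m + 1 = (l + m) + 1 from rfl]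
    exact Nat.choose_succ_succ _ _
  have hg' : ((l + m + 1).choose (2 * m + 1) : ℚ)
      = ((l + m).choose (2 * m) : ℚ) + ((l + m).choose (2 * m + 1) : ℚ) := by
    exact_mod_cast congrArg (Nat.cast : ℕ → ℚ) hg
  rw [hg']
  ring

/-- Reindexed Cameron–Nkwanta identity:
`C(i-1,m) 4^(i-1-m) = ∑_{j=1}^i (j/i) C(2i, i-j) C(j+m, 2m+1)`. -/
theorem stmt_4 (i m : ℕ) (hi : 1 ≤ i) :
    (Nat.choose (i - 1) m : ℚ) * 4 ^ (i - 1 - m) =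
      ∑ j ∈ Finset.Icc 1 i,
        ((j : ℚ) / (i : ℚ)) * (Nat.choose (2 * i) (i - j) : ℚ) *
          (Nat.choose (j + m) (2 * m + 1) : ℚ) := by
  obtain ⟨n, rfl⟩ : ∃ n, i = n + 1 := ⟨i - 1, by omega⟩
  have hIcc : Finset.Icc 1 (n + 1) = Finset.Ico 1 (n + 2) := by
    ext x; simp [Nat.lt_succ_iff]
  rw [hIcc, Finset.sum_Ico_eq_sum_range]
  have hrange : n + 2 - 1 = n + 1 := by omega
  rw [hrange]
  have hterm : ∀ l ∈ range (n + 1),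
      (((1 + l : ℕ) : ℚ) / ((n + 1 : ℕ) : ℚ))
          * ((2 * (n + 1)).choose ((n + 1) - (1 + l)) : ℚ)
          * (((1 + l) + m).choose (2 * m + 1) : ℚ)
      = (((2 * n + 1).choose (n + 1 + l) : ℚ) - ((2 * n + 1).choose (n + 2 + l) : ℚ))
          * ((l + m + 1).choose (2 * m + 1) : ℚ) := by
    intro l hl
    have hln : l ≤ n := by simpa using Nat.lt_succ_iff.mp (Finset.mem_range.mp hl)
    have hk := key_s4 n l hln
    have hne : ((n : ℚ) + 1) ≠ 0 := by positivity
    rw [show (n + 1) - (1 + l) = n - l by omega, show 2 * (n + 1) = 2 * n + 2 by ring,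
      show (1 + l) + m = l + m + 1 by omega]
    rw [div_mul_eq_mul_div, div_mul_eq_mul_div, div_eq_iff (by push_cast; exact hne)]
    push_cast
    linear_combination ((l + m + 1).choose (2 * m + 1) : ℚ) * hk
  rw [Finset.sum_congr rfl hterm, abel]
  have hT := T_eq n m
  have hT' : ((T n m : ℕ) : ℚ) = (n.choose m : ℚ) * 4 ^ (n - m) := by
    rw [hT]; push_cast; ring
  rw [show (n + 1) - 1 = n from rfl, ← hT']
  unfold T
  push_cast
  ring
end

section
/- The number of rooted compositions of Dyck paths of length 2i (compositions (P_1,...,P_j) of a Dyck path into nonempty Dyck segments, together with a choice of one distinguished segment) equals 4^{i-1}. -/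
/-- Height change of a Dyck step (`true` = up, `false` = down). -/
def dval (b : Bool) : ℤ := if b then 1 else -1

/-- The final height of a Dyck-step word. -/
def dsum (l : List Bool) : ℤ := (l.map dval).sum

/-- A Dyck path: every prefix has nonnegative height, and the final height is `0`. -/
def IsDyck (l : List Bool) : Prop :=
  (∀ pre, pre <+: l → 0 ≤ dsum pre) ∧ dsum l = 0

/-!
A rooted composition is a sequence of nonempty Dyck paths with one marked entry. If `C` is the
generating function of nonempty Dyck paths by semilength, sequences of length `j` are counted by
`C ^ j`, so rooted compositions are counted by `G = ∑ j, j * C ^ j`, the substitution of `C`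
into `X / (1 - X) ^ 2`; hence `G * (1 - C) ^ 2 = C`. Since `C = c - 1` for the Catalan series `c`, the
equation `c = 1 + X * c ^ 2` becomes `(1 - 4 * X) * C = X * (1 - C) ^ 2`, and cancelling
`(1 - C) ^ 2` gives `G = X / (1 - 4 * X)`.
-/

open Finset PowerSeries

lemma coeff_X_mul_mk_one_sq {R : Type*} [CommRing R] (j : ℕ) :
    coeff j (X * PowerSeries.mk 1 ^ 2 : R⟦X⟧) = j := by
  rcases j with _ | j
  · simp
  · rw [coeff_succ_X_mul, mk_one_pow_eq_mk_choose_add, coeff_mk]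
    simp [add_comm]

section WeightedCounting

variable {α β : Type*}

/-- `Nat.card` is `0` on infinite fibres, hence the finiteness hypotheses below. -/
noncomputable def weightGF (w : α → ℕ) : ℤ⟦X⟧ :=
  PowerSeries.mk fun n => (Nat.card {a // w a = n} : ℤ)

@[simp]
lemma coeff_weightGF (w : α → ℕ) (n : ℕ) :
    coeff n (weightGF w) = Nat.card {a // w a = n} :=
  coeff_mk _ _

lemma weightGF_congr {u : α → ℕ} {v : β → ℕ} (e : α ≃ β) (h : ∀ a, v (e a) = u a) :
    weightGF u = weightGF v := by
  ext n
  simp only [coeff_weightGF]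
  rw [Nat.card_congr (e.subtypeEquiv (p := fun a => u a = n) (q := fun b => v b = n) fun a => by
    rw [h])]

def fiberProdEquiv (u : α → ℕ) (v : β → ℕ) (n : ℕ) :
    {p : α × β // u p.1 + v p.2 = n} ≃
      Σ k : antidiagonal n, {a // u a = k.1.1} × {b // v b = k.1.2} where
  toFun p := ⟨⟨(u p.1.1, v p.1.2), mem_antidiagonal.2 p.2⟩, ⟨p.1.1, rfl⟩, ⟨p.1.2, rfl⟩⟩
  invFun x := ⟨(x.2.1.1, x.2.2.1), by rw [x.2.1.2, x.2.2.2]; exact mem_antidiagonal.1 x.1.2⟩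
  left_inv _ := rfl
  right_inv := by
    rintro ⟨⟨⟨k, l⟩, hkl⟩, ⟨a, ha⟩, ⟨b, hb⟩⟩
    dsimp only at ha hb
    subst ha hb
    rfl

variable {u : α → ℕ} {v : β → ℕ}

lemma finite_fiber_prod (hu : ∀ n, Finite {a // u a = n}) (hv : ∀ n, Finite {b // v b = n})
    (n : ℕ) : Finite {p : α × β // u p.1 + v p.2 = n} :=
  Finite.of_equiv _ (fiberProdEquiv u v n).symm

lemma weightGF_prod (hu : ∀ n, Finite {a // u a = n}) (hv : ∀ n, Finite {b // v b = n}) :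
    weightGF (fun p : α × β => u p.1 + v p.2) = weightGF u * weightGF v := by
  ext n
  rw [coeff_mul, coeff_weightGF, Nat.card_congr (fiberProdEquiv u v n), Nat.card_sigma,
    ← sum_coe_sort (antidiagonal n)]
  simp [Nat.card_prod]

variable {w : α → ℕ}

lemma finite_fiber_tuple (hw : ∀ n, Finite {a // w a = n}) (j n : ℕ) :
    Finite {f : Fin j → α // ∑ r, w (f r) = n} := by
  induction j generalizing n with
  | zero => infer_instance
  | succ j ih =>
    have := finite_fiber_prod hw ih n
    exact Finite.of_equiv _ ((Fin.consEquiv fun _ => α).subtypeEquiv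
      (p := fun p => w p.1 + ∑ r, w (p.2 r) = n) fun p => by simp [Fin.sum_univ_succ])

lemma weightGF_tuple (hw : ∀ n, Finite {a // w a = n}) (j : ℕ) :
    weightGF (fun f : Fin j → α => ∑ r, w (f r)) = weightGF w ^ j := by
  induction j with
  | zero =>
    ext n
    rcases n with _ | n <;> simp [coeff_one]
  | succ j ih =>
    rw [pow_succ', ← ih, ← weightGF_prod hw (finite_fiber_tuple hw j)]
    exact (weightGF_congr (Fin.consEquiv fun _ => α) fun p => by simp [Fin.sum_univ_succ]).symm

lemma card_le_sum_weight (hpos : ∀ a, 0 < w a) {j : ℕ} (f : Fin j → α) : j ≤ ∑ r, w (f r) := by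
  simpa using card_nsmul_le_sum univ (fun r => w (f r)) 1 fun r _ => hpos (f r)

def rootedFiberEquiv (hpos : ∀ a, 0 < w a) (n : ℕ) :
    {x : Σ j, (Fin j → α) × Fin j // ∑ r, w (x.2.1 r) = n} ≃
      Σ j : range (n + 1), {f : Fin j → α // ∑ r, w (f r) = n} × Fin j where
  toFun x := ⟨⟨x.1.1, mem_range_succ_iff.2 ((card_le_sum_weight hpos x.1.2.1).trans_eq x.2)⟩,
    ⟨x.1.2.1, x.2⟩, x.1.2.2⟩
  invFun y := ⟨⟨y.1, y.2.1.1, y.2.2⟩, y.2.1.2⟩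
  left_inv _ := rfl
  right_inv _ := rfl

lemma card_rooted_fiber (hw : ∀ n, Finite {a // w a = n}) (hpos : ∀ a, 0 < w a) (n : ℕ) :
    Nat.card {x : Σ j, (Fin j → α) × Fin j // ∑ r, w (x.2.1 r) = n} =
      ∑ j ∈ range (n + 1), Nat.card {f : Fin j → α // ∑ r, w (f r) = n} * j := by
  have := finite_fiber_tuple hw
  rw [Nat.card_congr (rootedFiberEquiv hpos n), Nat.card_sigma, ← sum_coe_sort (range (n + 1))]
  simp [Nat.card_prod]

theorem weightGF_rooted (hw : ∀ n, Finite {a // w a = n}) (hpos : ∀ a, 0 < w a) :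
    weightGF (fun x : Σ j, (Fin j → α) × Fin j => ∑ r, w (x.2.1 r)) =
      (X * PowerSeries.mk 1 ^ 2 : ℤ⟦X⟧).subst (weightGF w) := by
  have hF : HasSubst (weightGF w) := HasSubst.of_constantCoeff_zero' <| by
    rw [← coeff_zero_eq_constantCoeff_apply, coeff_weightGF, Nat.cast_eq_zero, Nat.card_eq_zero]
    exact Or.inl ⟨fun a => (hpos a.1).ne' a.2⟩
  ext n
  rw [coeff_subst' hF, finsum_eq_sum_of_support_subset (s := range (n + 1)), coeff_weightGF,
    card_rooted_fiber hw hpos]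
  · push_cast
    refine sum_congr rfl fun j _ => ?_
    rw [coeff_X_mul_mk_one_sq, ← weightGF_tuple hw, coeff_weightGF, smul_eq_mul, mul_comm]
  · intro j hj
    by_contra hjn
    rw [coe_range, Set.mem_Iio, not_lt] at hjn
    refine hj ?_
    have : IsEmpty {f : Fin j → α // ∑ r, w (f r) = n} :=
      ⟨fun f => by have := (card_le_sum_weight hpos f.1).trans_eq f.2; omega⟩
    simp only [← weightGF_tuple hw, coeff_weightGF, Nat.card_of_isEmpty, Nat.cast_zero, smul_zero]

end WeightedCounting

section Dyck

open DyckStep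

def boolEquivDyckStep : Bool ≃ DyckStep where
  toFun b := if b then U else D
  invFun s := s = U
  left_inv b := by cases b <;> rfl
  right_inv s := by cases s <;> rfl

lemma count_map_boolEquivDyckStep (l : List Bool) (b : Bool) :
    (l.map boolEquivDyckStep).count (boolEquivDyckStep b) = l.count b :=
  List.count_map_of_injective _ _ boolEquivDyckStep.injective _

lemma dsum_eq_count_sub_count (l : List Bool) :
    dsum l = l.count true - l.count false := by
  induction l with
  | nil => simp [dsum]
  | cons b l ih =>
    simp only [dsum, List.map_cons, List.sum_cons] at ih ⊢
    cases b <;> simp [dval, ih] <;> ring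

lemma isDyck_iff_count (l : List Bool) :
    IsDyck l ↔ l.count true = l.count false ∧
      ∀ k, (l.take k).count false ≤ (l.take k).count true := by
  simp only [IsDyck, dsum_eq_count_sub_count, sub_nonneg, sub_eq_zero, Nat.cast_le, Nat.cast_inj]
  refine ⟨fun ⟨hpre, h⟩ => ⟨h, fun k => hpre _ (List.take_prefix k l)⟩, fun ⟨h, htake⟩ => ⟨?_, h⟩⟩
  intro pre hpre
  rw [List.prefix_iff_eq_take.1 hpre]
  exact htake _

def dyckWordEquiv : {l : List Bool // IsDyck l} ≃ DyckWord where
  toFun l := ⟨l.1.map boolEquivDyckStep, by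
    change List.count (boolEquivDyckStep true) _ = List.count (boolEquivDyckStep false) _
    simp only [count_map_boolEquivDyckStep]
    exact ((isDyck_iff_count _).1 l.2).1, fun k => by
    change List.count (boolEquivDyckStep false) _ ≤ List.count (boolEquivDyckStep true) _
    simp only [← List.map_take, count_map_boolEquivDyckStep]
    exact ((isDyck_iff_count _).1 l.2).2 k⟩
  invFun p := ⟨p.toList.map boolEquivDyckStep.symm, by
    have hcount (l : List DyckStep) (b : Bool) :
        (l.map boolEquivDyckStep.symm).count b = l.count (boolEquivDyckStep b) := by
      rw [← count_map_boolEquivDyckStep, List.map_map, Equiv.self_comp_symm, List.map_id]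
    rw [isDyck_iff_count]
    simp only [← List.map_take, hcount]
    exact ⟨p.count_U_eq_count_D, p.count_D_le_count_U⟩⟩
  left_inv l := Subtype.ext (by simp)
  right_inv p := DyckWord.ext (by simp)

lemma semilength_dyckWordEquiv (l : {l : List Bool // IsDyck l}) :
    (dyckWordEquiv l).semilength = l.1.count true :=
  count_map_boolEquivDyckStep l.1 true

lemma IsDyck.length_eq_two_mul_count_true {l : List Bool} (h : IsDyck l) :
    l.length = 2 * l.count true := by
  rw [← List.count_true_add_count_false, ← ((isDyck_iff_count l).1 h).1, two_mul]

lemma IsDyck.count_true_pos {l : List Bool} (h : IsDyck l) (hne : l ≠ []) : 0 < l.count true := by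
  have := h.length_eq_two_mul_count_true
  have := List.length_pos_iff.2 hne
  omega

lemma count_true_dyckWordEquiv_symm (p : DyckWord) :
    (dyckWordEquiv.symm p).1.count true = p.semilength := by
  rw [← semilength_dyckWordEquiv, Equiv.apply_symm_apply]

def nonemptyDyckFiberEquiv {n : ℕ} (hn : n ≠ 0) :
    {l : {l : List Bool // IsDyck l ∧ l ≠ []} // l.1.count true = n} ≃
      {p : DyckWord // p.semilength = n} where
  toFun l := ⟨dyckWordEquiv ⟨l.1.1, l.1.2.1⟩, by rw [semilength_dyckWordEquiv]; exact l.2⟩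
  invFun p := ⟨⟨(dyckWordEquiv.symm p.1).1, (dyckWordEquiv.symm p.1).2, fun h => hn <| by
      rw [← p.2, ← count_true_dyckWordEquiv_symm, h, List.count_nil]⟩,
    by rw [count_true_dyckWordEquiv_symm, p.2]⟩
  left_inv l := by simp
  right_inv p := by simp

lemma isEmpty_nonemptyDyck_fiber_zero :
    IsEmpty {l : {l : List Bool // IsDyck l ∧ l ≠ []} // l.1.count true = 0} :=
  ⟨fun l => (l.1.2.1.count_true_pos l.1.2.2).ne' l.2⟩

lemma finite_nonemptyDyck_fiber (n : ℕ) :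
    Finite {l : {l : List Bool // IsDyck l ∧ l ≠ []} // l.1.count true = n} := by
  rcases eq_or_ne n 0 with rfl | hn
  · have := isEmpty_nonemptyDyck_fiber_zero
    infer_instance
  · exact Finite.of_equiv _ (nonemptyDyckFiberEquiv hn).symm

lemma weightGF_nonemptyDyck :
    weightGF (fun l : {l : List Bool // IsDyck l ∧ l ≠ []} => l.1.count true) =
      map (Nat.castRingHom ℤ) catalanSeries - 1 := by
  ext n
  rcases n with _ | n
  · have := isEmpty_nonemptyDyck_fiber_zero
    rw [coeff_weightGF, map_sub, coeff_map, catalanSeries_coeff, coeff_one]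
    simp
  · rw [coeff_weightGF, Nat.card_congr (nonemptyDyckFiberEquiv n.succ_ne_zero),
      Nat.card_eq_fintype_card, DyckWord.card_dyckWord_semilength_eq_catalan]
    simp [coeff_one]

end Dyck

lemma subst_X_mul_mk_one_sq_mul_one_sub_sq {R : Type*} [CommRing R] {F : R⟦X⟧}
    (hF : HasSubst F) : (X * PowerSeries.mk 1 ^ 2 : R⟦X⟧).subst F * (1 - F) ^ 2 = F := by
  have h := congrArg (substAlgHom (R := R) hF) (congrArg (X * ·) (congrArg (· ^ 2)
    (mk_one_mul_one_sub_eq_one R)))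
  simp only [mul_pow, one_pow, mul_one, ← mul_assoc, map_mul, map_pow, map_sub, map_one,
    coe_substAlgHom, subst_X hF] at h
  rwa [subst_mul hF, subst_pow hF, subst_X hF]

lemma X_mul_rescale_mk_one_mul_one_sub {R : Type*} [CommRing R] (a : R) :
    X * rescale a (PowerSeries.mk 1) * (1 - C a * X) = X := by
  have h := congrArg (rescale a) (mk_one_mul_one_sub_eq_one R)
  rw [map_mul, map_sub, map_one, rescale_X] at h
  rw [mul_assoc, h, mul_one]

theorem subst_X_mul_mk_one_sq_catalan :
    (X * PowerSeries.mk 1 ^ 2 : ℤ⟦X⟧).subst (map (Nat.castRingHom ℤ) catalanSeries - 1) =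
      X * rescale 4 (PowerSeries.mk 1) := by
  set c := map (Nat.castRingHom ℤ) catalanSeries
  have hc : c ^ 2 * X + 1 = c := by
    simpa using congrArg (map (Nat.castRingHom ℤ)) catalanSeries_sq_mul_X_add_one
  have hc0 : constantCoeff c = 1 := by
    rw [← coeff_zero_eq_constantCoeff_apply, coeff_map, catalanSeries_coeff]
    simp
  have hF : HasSubst (c - 1) := HasSubst.of_constantCoeff_zero' (by simp [hc0])
  set G := (X * PowerSeries.mk 1 ^ 2 : ℤ⟦X⟧).subst (c - 1)
  have hG := subst_X_mul_mk_one_sq_mul_one_sub_sq hF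
  have h4 := X_mul_rescale_mk_one_mul_one_sub (4 : ℤ)
  rw [map_ofNat] at h4
  have hsq : (1 - (c - 1)) ^ 2 ≠ 0 :=
    pow_ne_zero _ (ne_of_apply_ne constantCoeff (by simp [hc0]))
  have hgeo : (1 - 4 * X : ℤ⟦X⟧) ≠ 0 := ne_of_apply_ne constantCoeff (by simp)
  have hGX : G * (1 - 4 * X) = X := by
    refine mul_right_cancel₀ hsq ?_
    linear_combination (1 - 4 * X) * hG - hc
  exact mul_right_cancel₀ hgeo (hGX.trans h4.symm)

lemma sum_length_eq_two_mul_sum_count_true {j : ℕ} (f : Fin j → List Bool)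
    (hf : ∀ r, IsDyck (f r)) : ∑ r, (f r).length = 2 * ∑ r, (f r).count true := by
  rw [mul_sum]
  exact sum_congr rfl fun r _ => (hf r).length_eq_two_mul_count_true

def rootedDyckEquiv (i : ℕ) :
    {x : Σ j : ℕ, (Fin j → List Bool) × Fin j //
        (∀ r, IsDyck (x.2.1 r) ∧ x.2.1 r ≠ []) ∧ ∑ r, (x.2.1 r).length = 2 * i} ≃
      {x : Σ j : ℕ, (Fin j → {l : List Bool // IsDyck l ∧ l ≠ []}) × Fin j //
        ∑ r, (x.2.1 r).1.count true = i} where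
  toFun x := ⟨⟨x.1.1, fun r => ⟨x.1.2.1 r, x.2.1 r⟩, x.1.2.2⟩, by
    show ∑ r, (x.1.2.1 r).count true = i
    have := x.2.2
    rw [sum_length_eq_two_mul_sum_count_true _ fun r => (x.2.1 r).1] at this
    omega⟩
  invFun x := ⟨⟨x.1.1, fun r => (x.1.2.1 r).1, x.1.2.2⟩, fun r => (x.1.2.1 r).2, by
    rw [sum_length_eq_two_mul_sum_count_true _ fun r => (x.1.2.1 r).2.1, x.2]⟩
  left_inv _ := rfl
  right_inv _ := rfl

/-- The number of rooted compositions of Dyck paths of length `2i` — compositions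
`(P₁, …, P_j)` into nonempty Dyck segments together with a distinguished segment —
equals `4^{i-1}`. -/
theorem stmt_15 (i : ℕ) (hi : 1 ≤ i) :
    Nat.card {x : Σ j : ℕ, (Fin j → List Bool) × Fin j //
        (∀ r, IsDyck (x.2.1 r) ∧ x.2.1 r ≠ []) ∧ ∑ r, (x.2.1 r).length = 2 * i} =
      4 ^ (i - 1) := by
  obtain ⟨k, rfl⟩ : ∃ k, i = k + 1 := ⟨i - 1, by omega⟩
  have h := congrArg (coeff (k + 1))
    (weightGF_rooted finite_nonemptyDyck_fiber fun l => l.2.1.count_true_pos l.2.2)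
  rw [weightGF_nonemptyDyck, subst_X_mul_mk_one_sq_catalan, coeff_weightGF, coeff_succ_X_mul,
    coeff_rescale, coeff_mk, Pi.one_apply, mul_one] at h
  rw [Nat.card_congr (rootedDyckEquiv (k + 1)), Nat.add_sub_cancel]
  exact_mod_cast h
end

section
/- Let g(x) = (1 - 2x - √(1-4x))/(2x²) be the generating function of the Catalan numbers C_{n+1} (shifted) and let A(x) = 1/(1-x)². Then g(x)·A(x·g(x)) = 1/(1-4x) as formal power series. -/
open PowerSeries

/-! With `c = 1 + X g`, the hypothesis says that `c` is the Catalan series, so `c = 1 + X c²` and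
`g = c²`. Then `(1 - 4X) g = (1 - 4X) c² = c² - 4(c - 1) = (2 - c)² = (1 - X g)²`, and inverting
`1 - 4X` and `1 - X g` gives the identity. -/

namespace PowerSeries

variable {R : Type*}

theorem map_catalanSeries_sq_mul_X_add_one [CommSemiring R] :
    map (Nat.castRingHom R) catalanSeries ^ 2 * X + 1 = map (Nat.castRingHom R) catalanSeries := by
  simpa using congrArg (map (Nat.castRingHom R)) catalanSeries_sq_mul_X_add_one

theorem mul_X_add_one_eq_map_catalanSeries [CommSemiring R] {g : R⟦X⟧}
    (hg : ∀ n, coeff n g = catalan (n + 1)) :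
    g * X + 1 = map (Nat.castRingHom R) catalanSeries := by
  ext (_ | n) <;> simp [coeff_succ_mul_X, hg]

theorem eq_map_catalanSeries_sq [CommRing R] {g : R⟦X⟧}
    (hg : ∀ n, coeff n g = catalan (n + 1)) :
    g = map (Nat.castRingHom R) catalanSeries ^ 2 := by
  apply mul_X_cancel
  have h := map_catalanSeries_sq_mul_X_add_one (R := R)
  rw [← mul_X_add_one_eq_map_catalanSeries hg] at h ⊢
  linear_combination -h

theorem one_sub_four_X_mul_eq_sq_of_coeff_eq_catalan_succ [CommRing R] {g : R⟦X⟧}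
    (hg : ∀ n, coeff n g = catalan (n + 1)) :
    (1 - 4 * X) * g = (1 - X * g) ^ 2 := by
  set c := map (Nat.castRingHom R) catalanSeries
  have hc : c ^ 2 * X + 1 = c := map_catalanSeries_sq_mul_X_add_one
  rw [eq_map_catalanSeries_sq hg]
  linear_combination (-(c + 1 + X * c ^ 2)) * hc

theorem mul_inv_sq_eq_inv_of_mul_eq_sq {k : Type*} [Field k] {a b g : k⟦X⟧}
    (ha : constantCoeff a ≠ 0) (hb : constantCoeff b ≠ 0) (h : b * g = a ^ 2) :
    g * a⁻¹ ^ 2 = b⁻¹ := by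
  rw [eq_inv_iff_mul_eq_one hb]
  calc g * a⁻¹ ^ 2 * b = (b * g) * a⁻¹ ^ 2 := by ring
    _ = (a * a⁻¹) ^ 2 := by rw [h]; ring
    _ = 1 := by rw [PowerSeries.mul_inv_cancel _ ha, one_pow]

end PowerSeries

/-- Riordan-array identity: if `g = ∑ C_{n+1} xⁿ` (the shifted Catalan generating
function, `g(x) = (1-2x-√(1-4x))/(2x²)`) and `A(x) = 1/(1-x)²`, then
`g(x)·A(x·g(x)) = 1/(1-4x)`. -/
theorem stmt_18 (g : PowerSeries ℚ)
    (hg : ∀ n, PowerSeries.coeff n g = catalan (n + 1)) :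
    g * ((1 - PowerSeries.X * g)⁻¹) ^ 2 = (1 - 4 * PowerSeries.X)⁻¹ :=
  mul_inv_sq_eq_inv_of_mul_eq_sq (by simp) (by simp)
    (one_sub_four_X_mul_eq_sq_of_coeff_eq_catalan_succ hg)
end

section
/- Let g(x) = (1 - 3x - √(1-6x+x²))/(4x²) be the generating function of the little Schröder numbers and let A(x) = 1/((1-x)(1-2x)). Then g(x)·A(x·g(x)) = 1/(1-6x) as formal power series. -/
open PowerSeries

theorem PowerSeries.mul_mul_inv_cancel_left {k : Type*} [Field k] {φ : k⟦X⟧}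
    (hφ : constantCoeff φ ≠ 0) (ψ : k⟦X⟧) : φ * (φ * ψ)⁻¹ = ψ⁻¹ := by
  rw [PowerSeries.mul_inv_rev, mul_left_comm, PowerSeries.mul_inv_cancel φ hφ, mul_one]

/-- Riordan-array identity: if `g` is the little Schröder generating function,
characterized by `g = 1 + 3x·g + 2x²·g²` (i.e. `g(x) = (1-3x-√(1-6x+x²))/(4x²)`),
and `A(x) = 1/((1-x)(1-2x))`, then `g(x)·A(x·g(x)) = 1/(1-6x)`. -/
theorem stmt_19 (g : PowerSeries ℚ)
    (hg : g = 1 + 3 * PowerSeries.X * g + 2 * PowerSeries.X ^ 2 * g ^ 2) :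
    g * (((1 - PowerSeries.X * g) * (1 - 2 * PowerSeries.X * g))⁻¹) =
      (1 - 6 * PowerSeries.X)⁻¹ := by
  have hfactor : (1 - X * g) * (1 - 2 * X * g) = g * (1 - 6 * X) := by
    linear_combination -hg
  have hg0 : constantCoeff g = 1 := by
    simpa using congrArg constantCoeff hg
  rw [hfactor, PowerSeries.mul_mul_inv_cancel_left (by simp [hg0])]
end
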